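/- ∑_{n=0}^∞ (1/(4n+1)) · ((1/2)_n / n!)² = π² / (4 Γ(3/4)⁴), where (1/2)_n is the Pochhammer symbol. -/

import Mathlib

/-!
Let `c n = (1/2)_n / n!`, the coefficients of `(1 - x)^(-1/2) = ∑ c n * x^n`, and let
`arcsl w = ∫₀ʷ (1 - t⁴)^(-1/2) dt = ∑ c n * w^(4n+1) / (4n+1)` be the lemniscatic arcsine.
The integral `∫₀¹ arcsl w * arcsl' w dw` equals `arcsl 1 ^ 2 / 2`; integrating term by term
(all terms are nonnegative) it also equals `∑ c n / (4n+1) * ∫₀¹ w^(4n+1) (1 - w⁴)^(-1/2) dw`,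
and by the Beta integral the inner integral is `π/4 * c n`. Hence the sum is `2/π * arcsl 1 ^ 2`.
Another Beta integral gives `arcsl 1 = Γ(1/4) Γ(1/2) / (4 Γ(3/4))`, and the reflection formula
`Γ(1/4) Γ(3/4) = π √2` turns this into `π² / (4 Γ(3/4)⁴)`.
-/

open scoped Real

noncomputable def poch (x : ℝ) (n : ℕ) : ℝ := ∏ k ∈ Finset.range n, (x + k)

open MeasureTheory Set ProbabilityTheory
open Real (Gamma)
open scoped Nat

theorem poch_succ (x : ℝ) (n : ℕ) : poch x (n + 1) = poch x n * (x + n) :=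
  Finset.prod_range_succ _ _

theorem poch_pos {x : ℝ} (hx : 0 < x) (n : ℕ) : 0 < poch x n :=
  Finset.prod_pos fun k _ => by positivity

theorem poch_eq_ascPochhammer_eval (x : ℝ) (n : ℕ) : poch x n = (ascPochhammer ℝ n).eval x := by
  induction n with
  | zero => simp [poch]
  | succ n ih => simp [poch_succ, ascPochhammer_succ_right, ih]

theorem poch_div_factorial_eq_multichoose (x : ℝ) (n : ℕ) :
    poch x n / n ! = Ring.multichoose x n := by
  have h := Ring.factorial_nsmul_multichoose_eq_ascPochhammer x n
  rw [Polynomial.ascPochhammer_smeval_cast, Polynomial.ascPochhammer_smeval_eq_eval,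
    nsmul_eq_mul] at h
  rw [poch_eq_ascPochhammer_eval, ← h]
  field_simp

theorem hasSum_poch_div_factorial_mul_pow (a : ℝ) {x : ℝ} (hx : |x| < 1) :
    HasSum (fun n => poch a n / n ! * x ^ n) ((1 - x) ^ (-a)) := by
  have h := (Real.one_div_one_sub_rpow_hasFPowerSeriesOnBall_zero a).hasSum
    (y := x) (by simpa [enorm_eq_nnnorm, ← NNReal.coe_lt_one] using hx)
  rw [Real.rpow_neg (by linarith [abs_lt.1 hx]), ← one_div]
  simpa [FormalMultilinearSeries.ofScalars_apply_eq, poch_div_factorial_eq_multichoose,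
    Ring.multichoose_eq, mul_comm] using h

theorem Gamma_add_nat_eq_poch_mul_Gamma {x : ℝ} (hx : ∀ k : ℕ, x ≠ -k) (n : ℕ) :
    Gamma (x + n) = poch x n * Gamma x := by
  induction n with
  | zero => simp [poch]
  | succ n ih =>
    have hxn : x + n ≠ 0 := fun h => hx n (by linarith)
    rw [Nat.cast_succ, ← add_assoc, Real.Gamma_add_one hxn, ih, poch_succ]
    ring

theorem Real.Gamma_one_div_four_mul_Gamma_three_div_four :
    Gamma (1 / 4) * Gamma (3 / 4) = π * √2 := by
  have h := Real.Gamma_mul_Gamma_one_sub (1 / 4)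
  rw [show (1 : ℝ) - 1 / 4 = 3 / 4 by norm_num, show π * (1 / 4) = π / 4 by ring,
    Real.sin_pi_div_four] at h
  rw [h]
  field_simp
  rw [Real.sq_sqrt zero_le_two]

theorem Real.Gamma_one_half_sq : Gamma (1 / 2) ^ 2 = π := by
  rw [Real.Gamma_one_half_eq, Real.sq_sqrt Real.pi_pos.le]

theorem integral_rpow_mul_one_sub_rpow {p q : ℝ} (hp : 0 < p) (hq : 0 < q) :
    ∫ x in Ioo 0 1, x ^ (p - 1) * (1 - x) ^ (q - 1) = beta p q := by
  have hB := beta_pos hp hq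
  have h := lintegral_betaPDF_eq_one hp hq
  rw [lintegral_betaPDF, ← ENNReal.toReal_eq_one_iff,
    ← integral_eq_lintegral_of_nonneg_ae] at h
  · simp_rw [mul_assoc, integral_const_mul] at h
    field_simp at h
    exact h
  · refine ae_restrict_of_forall_mem measurableSet_Ioo fun x hx => ?_
    have := sub_pos.2 hx.2
    have := hx.1
    positivity
  · exact Measurable.aestronglyMeasurable (by fun_prop)

theorem image_pow_Ioo_zero_one {k : ℕ} (hk : k ≠ 0) :
    (fun x : ℝ => x ^ k) '' Ioo 0 1 = Ioo 0 1 := by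
  ext y
  constructor
  · rintro ⟨x, hx, rfl⟩
    exact ⟨pow_pos hx.1 k, pow_lt_one₀ hx.1.le hx.2 hk⟩
  · intro hy
    refine ⟨y ^ (k⁻¹ : ℝ), ⟨Real.rpow_pos_of_pos hy.1 _,
      Real.rpow_lt_one hy.1.le hy.2 (by positivity)⟩, ?_⟩
    dsimp only
    rw [← Real.rpow_natCast, ← Real.rpow_mul hy.1.le, inv_mul_cancel₀ (by exact_mod_cast hk),
      Real.rpow_one]

theorem integral_rpow_mul_one_sub_pow_rpow {s q : ℝ} (hs : -1 < s) (hq : 0 < q) {k : ℕ}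
    (hk : k ≠ 0) :
    ∫ x in Ioo 0 1, x ^ s * (1 - x ^ k) ^ (q - 1) = beta ((s + 1) / k) q / k := by
  have hk' : (0 : ℝ) < k := by positivity
  have hsub := integral_image_eq_integral_abs_deriv_smul (measurableSet_Ioo (a := (0 : ℝ)) (b := 1))
    (fun x _ => (hasDerivAt_pow k x).hasDerivWithinAt)
    ((pow_left_strictMonoOn₀ hk).injOn.mono fun x hx => le_of_lt hx.1)
    (fun y : ℝ => y ^ ((s + 1) / k - 1) * (1 - y) ^ (q - 1))
  rw [image_pow_Ioo_zero_one hk, integral_rpow_mul_one_sub_rpow (div_pos (by linarith) hk') hq]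
    at hsub
  rw [hsub, eq_div_iff hk'.ne', ← integral_mul_const]
  refine setIntegral_congr_fun measurableSet_Ioo fun x hx => ?_
  have hpow : x ^ (k - 1) * (x ^ k) ^ ((s + 1) / k - 1) = x ^ s := by
    rw [← Real.rpow_natCast, ← Real.rpow_natCast, ← Real.rpow_mul hx.1.le, ← Real.rpow_add hx.1,
      Nat.cast_sub (Nat.one_le_iff_ne_zero.2 hk)]
    congr 1
    field_simp
    ring
  rw [smul_eq_mul, abs_of_pos (by have := hx.1; positivity), ← hpow]
  ring

theorem hasSum_integral_of_nonneg {α ι : Type*} [MeasurableSpace α] [Countable ι] {μ : Measure α}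
    {f : ι → α → ℝ} {F : α → ℝ} (hf : ∀ i, AEStronglyMeasurable (f i) μ)
    (hf_nonneg : ∀ i, 0 ≤ᵐ[μ] f i) (hF : Integrable F μ)
    (hsum : ∀ᵐ x ∂μ, HasSum (fun i => f i x) (F x)) :
    HasSum (fun i => ∫ x, f i x ∂μ) (∫ x, F x ∂μ) := by
  refine hasSum_integral_of_dominated_convergence f hf (fun i => ?_)
    (hsum.mono fun x hx => hx.summable) ?_ hsum
  · filter_upwards [hf_nonneg i] with x hx
    rw [Real.norm_of_nonneg hx]
  · exact hF.congr (hsum.mono fun x hx => hx.tsum_eq.symm)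

theorem integral_primitive_mul_self {f : ℝ → ℝ} {a b : ℝ} (hab : a ≤ b)
    (hf : IntervalIntegrable f volume a b) (hfc : ContinuousOn f (Ioo a b)) :
    ∫ x in a..b, (∫ t in a..x, f t) * f x = (∫ x in a..b, f x) ^ 2 / 2 := by
  set G : ℝ → ℝ := fun x => ∫ t in a..x, f t
  have hG : ContinuousOn G (Icc a b) := by
    simpa [uIcc_of_le hab] using intervalIntegral.continuousOn_primitive_interval
      ((intervalIntegrable_iff' (by finiteness)).1 hf)
  have hG' : ∀ x ∈ Ioo a b, HasDerivAt G (f x) x := fun x hx =>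
    intervalIntegral.integral_hasDerivAt_right (hf.mono_set (by
        rw [uIcc_of_le hab, uIcc_of_le hx.1.le]; exact Icc_subset_Icc_right hx.2.le))
      (hfc.stronglyMeasurableAtFilter isOpen_Ioo x hx) (hfc.continuousAt (Ioo_mem_nhds hx.1 hx.2))
  have hFTC := intervalIntegral.integral_eq_sub_of_hasDeriv_right_of_le
    (f' := fun x => G x * f x) hab ((hG.pow 2).div_const 2)
    (fun x hx => by
      convert (((hG' x hx).pow 2).div_const 2).hasDerivWithinAt using 1
      ring)
    (hf.continuousOn_mul (by rwa [uIcc_of_le hab]))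
  simpa [G] using hFTC

namespace Ramanujan

noncomputable def coeff (n : ℕ) : ℝ := poch (1 / 2) n / n !

noncomputable def kernel (w : ℝ) : ℝ := (1 - w ^ 4) ^ (-(1 / 2) : ℝ)

noncomputable def arcsl (w : ℝ) : ℝ := ∫ t in 0..w, kernel t

theorem coeff_pos (n : ℕ) : 0 < coeff n :=
  div_pos (poch_pos one_half_pos n) (by positivity)

theorem hasSum_kernel {w : ℝ} (hw : |w| < 1) :
    HasSum (fun n => coeff n * w ^ (4 * n)) (kernel w) := by
  have hw4 : |w ^ 4| < 1 := by
    rw [abs_pow]; exact pow_lt_one₀ (abs_nonneg w) hw (by norm_num)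
  simpa [coeff, kernel, pow_mul] using hasSum_poch_div_factorial_mul_pow (1 / 2) hw4

@[fun_prop]
theorem measurable_kernel : Measurable kernel := by
  unfold kernel; fun_prop

theorem kernel_nonneg {w : ℝ} (hw : w ^ 4 ≤ 1) : 0 ≤ kernel w :=
  Real.rpow_nonneg (sub_nonneg.2 hw) _

theorem continuousOn_kernel : ContinuousOn kernel (Ioo 0 1) :=
  ((continuous_const.sub (continuous_pow 4)).continuousOn).rpow_const fun w hw =>
    Or.inl (sub_pos.2 (pow_lt_one₀ hw.1.le hw.2 (by norm_num))).ne'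

theorem integral_rpow_mul_kernel {s : ℝ} (hs : -1 < s) :
    ∫ x in Ioo 0 1, x ^ s * kernel x = beta ((s + 1) / 4) (1 / 2) / 4 := by
  have h := integral_rpow_mul_one_sub_pow_rpow hs one_half_pos (k := 4) (by norm_num)
  rwa [show (1 / 2 : ℝ) - 1 = -(1 / 2) by norm_num] at h

theorem integral_kernel :
    ∫ x in Ioo 0 1, kernel x = Gamma (1 / 4) * Gamma (1 / 2) / (4 * Gamma (3 / 4)) := by
  have h := integral_rpow_mul_kernel (s := 0) (by norm_num)
  simp only [Real.rpow_zero, one_mul] at h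
  rw [h, beta]
  norm_num
  ring

theorem integral_pow_mul_kernel (n : ℕ) :
    ∫ x in Ioo 0 1, x ^ (4 * n + 1) * kernel x = π / 4 * coeff n := by
  have h := integral_rpow_mul_kernel (s := (4 * n + 1 : ℕ))
    (neg_one_lt_zero.trans_le (Nat.cast_nonneg _))
  simp only [Real.rpow_natCast] at h
  have hs : ((4 * n + 1 : ℕ) + 1 : ℝ) / 4 = 1 / 2 + n := by push_cast; ring
  rw [h, beta, hs, show (1 / 2 + n + 1 / 2 : ℝ) = n + 1 by ring,
    Real.Gamma_nat_eq_factorial, Gamma_add_nat_eq_poch_mul_Gamma (by intro k; linarith), coeff,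
    ← Real.Gamma_one_half_sq]
  ring

theorem integrableOn_kernel : IntegrableOn kernel (Ioo 0 1) :=
  Integrable.of_integral_ne_zero (by rw [integral_kernel]; exact ne_of_gt (by positivity))

theorem intervalIntegrable_kernel : IntervalIntegrable kernel volume 0 1 :=
  (intervalIntegrable_iff_integrableOn_Ioc_of_le zero_le_one).2
    ((integrableOn_Ioc_iff_integrableOn_Ioo (by finiteness)).2 integrableOn_kernel)

theorem arcsl_one : arcsl 1 = Gamma (1 / 4) * Gamma (1 / 2) / (4 * Gamma (3 / 4)) := by
  rw [arcsl, intervalIntegral.integral_of_le zero_le_one, integral_Ioc_eq_integral_Ioo,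
    integral_kernel]

theorem hasSum_arcsl {w : ℝ} (hw₀ : 0 ≤ w) (hw₁ : w ≤ 1) :
    HasSum (fun n => coeff n / (4 * n + 1) * w ^ (4 * n + 1)) (arcsl w) := by
  have h := hasSum_integral_of_nonneg (μ := volume.restrict (Ioo 0 w))
    (f := fun n t => coeff n * t ^ (4 * n)) (F := kernel)
    (fun n => Measurable.aestronglyMeasurable (by fun_prop))
    (fun n => ae_restrict_of_forall_mem measurableSet_Ioo fun t ht =>
      mul_nonneg (coeff_pos n).le (pow_nonneg ht.1.le _))
    (integrableOn_kernel.mono_set (Ioo_subset_Ioo_right hw₁))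
    (ae_restrict_of_forall_mem measurableSet_Ioo fun t ht =>
      hasSum_kernel (abs_lt.2 ⟨by linarith [ht.1], ht.2.trans_le hw₁⟩))
  rw [arcsl, intervalIntegral.integral_of_le hw₀, integral_Ioc_eq_integral_Ioo]
  convert h using 2 with n
  rw [integral_const_mul, ← integral_Ioc_eq_integral_Ioo, ← intervalIntegral.integral_of_le hw₀,
    integral_pow]
  push_cast
  ring

theorem hasSum_coeff_sq_div :
    HasSum (fun n : ℕ => coeff n ^ 2 / (4 * n + 1)) (2 / π * arcsl 1 ^ 2) := by
  have hI : ∫ w in Ioo 0 1, arcsl w * kernel w = arcsl 1 ^ 2 / 2 := by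
    rw [← integral_Ioc_eq_integral_Ioo, ← intervalIntegral.integral_of_le zero_le_one]
    exact integral_primitive_mul_self zero_le_one intervalIntegrable_kernel continuousOn_kernel
  have h := hasSum_integral_of_nonneg (μ := volume.restrict (Ioo 0 1))
    (f := fun n w => coeff n / (4 * n + 1) * (w ^ (4 * n + 1) * kernel w))
    (F := fun w => arcsl w * kernel w)
    (fun n => Measurable.aestronglyMeasurable (by fun_prop))
    (fun n => ae_restrict_of_forall_mem measurableSet_Ioo fun w hw =>
      mul_nonneg (div_nonneg (coeff_pos n).le (by positivity))
        (mul_nonneg (pow_nonneg hw.1.le _) (kernel_nonneg (pow_le_one₀ hw.1.le hw.2.le))))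
    (Integrable.of_integral_ne_zero (by rw [hI, arcsl_one]; exact ne_of_gt (by positivity)))
    (ae_restrict_of_forall_mem measurableSet_Ioo fun w hw => by
      simpa only [mul_assoc] using (hasSum_arcsl hw.1.le hw.2.le).mul_right (kernel w))
  have hterm (n : ℕ) : 4 / π * ∫ w in Ioo 0 1, coeff n / (4 * n + 1) * (w ^ (4 * n + 1) * kernel w)
      = coeff n ^ 2 / (4 * n + 1) := by
    rw [integral_const_mul, integral_pow_mul_kernel]
    field_simp
  rw [show 2 / π * arcsl 1 ^ 2 = 4 / π * (arcsl 1 ^ 2 / 2) by ring, ← hI]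
  simpa only [hterm] using h.mul_left (4 / π)

end Ramanujan

open Ramanujan

theorem ramanujan_sum_one :
    HasSum (fun n : ℕ => (1 / (4 * (n : ℝ) + 1)) * (poch (1/2) n / (n.factorial : ℝ)) ^ 2)
      (π ^ 2 / (4 * Real.Gamma (3/4) ^ 4)) := by
  have hΓ : Gamma (1 / 4) = π * √2 / Gamma (3 / 4) :=
    eq_div_of_mul_eq (Real.Gamma_pos_of_pos (by norm_num)).ne'
      Real.Gamma_one_div_four_mul_Gamma_three_div_four
  have hvalue : π ^ 2 / (4 * Real.Gamma (3/4) ^ 4) = 2 / π * arcsl 1 ^ 2 := by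
    rw [arcsl_one, hΓ]
    field_simp
    rw [Real.Gamma_one_half_sq, Real.sq_sqrt zero_le_two]
    ring
  simpa only [coeff, hvalue, one_div_mul_eq_div] using hasSum_coeff_sq_div
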